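/- For a BCN with output y(t) = H x(t) and desired output y* ∈ L_P, the output regulation problem by state feedback is solvable if and only if (i) the set C(y*) of cycles of D(L_tot) whose nodes all correspond to states in X(y*) = {δ_N^j : H δ_N^j = y*} is nonempty, and (ii) the union of basins of attraction of the states in those cycles is the whole state set L_N. -/
import Mathlib


def traj {N M : ℕ} (f : Fin M → Fin N → Fin N) (u : ℕ → Fin M) (x0 : Fin N) : ℕ → Fin N
  | 0 => x0
  | t + 1 => f (u t) (traj f u x0 t)

/-- `j` lies on a cycle of `D(L_tot)` all of whose nodes correspond to states in
`X(y*) = {δ_N^j : H δ_N^j = y*}`. -/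
def OnCycle {N M P : ℕ} (f : Fin M → Fin N → Fin N) (hmap : Fin N → Fin P)
    (ystar : Fin P) (j : Fin N) : Prop :=
  ∃ len, 1 ≤ len ∧ ∃ c : ℕ → Fin N, c 0 = j ∧ c len = j ∧
    (∀ t < len, ∃ v : Fin M, f v (c t) = c (t + 1)) ∧
    (∀ t ≤ len, hmap (c t) = ystar)

lemma traj_shift {N M : ℕ} (f : Fin M → Fin N → Fin N) (u : ℕ → Fin M) (x : Fin N) :
    ∀ t, traj f u x (t + 1) = traj f (fun s => u (s + 1)) (f (u 0) x) t
  | 0 => rfl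
  | t + 1 => by
      show f (u (t + 1)) (traj f u x (t + 1)) = _
      rw [traj_shift f u x t]
      rfl

lemma onCycle_step {N M P : ℕ} {f : Fin M → Fin N → Fin N} {hmap : Fin N → Fin P}
    {ystar : Fin P} {j : Fin N} (h : OnCycle f hmap ystar j) :
    hmap j = ystar ∧ ∃ v, OnCycle f hmap ystar (f v j) := by
  obtain ⟨len, hlen, c, hc0, hclen, hedge, hout⟩ := h
  have hj : hmap j = ystar := by rw [← hc0]; exact hout 0 (Nat.zero_le _)
  refine ⟨hj, ?_⟩
  obtain ⟨v, hv⟩ := hedge 0 hlen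
  refine ⟨v, ?_⟩
  have hvj : f v j = c 1 := by rw [← hc0]; exact hv
  rw [hvj]
  refine ⟨len, hlen, fun t => c (t % len + 1), ?_, ?_, ?_, ?_⟩
  · simp
  · simp [Nat.mod_self]
  · intro t ht
    rcases lt_or_eq_of_le (Nat.succ_le_of_lt ht) with h1 | h1
    · refine ⟨(hedge (t + 1) h1).choose, ?_⟩
      have h2 := (hedge (t + 1) h1).choose_spec
      show f _ (c (t % len + 1)) = c ((t + 1) % len + 1)
      rw [Nat.mod_eq_of_lt ht, Nat.mod_eq_of_lt h1]
      exact h2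
    · refine ⟨v, ?_⟩
      show f v (c (t % len + 1)) = c ((t + 1) % len + 1)
      rw [Nat.mod_eq_of_lt ht, ← h1, Nat.mod_self]
      have h2 : c (t + 1) = c 0 := by rw [show t + 1 = len from h1, hclen, hc0]
      rw [h2]
      exact hv
  · intro t _
    show hmap (c (t % len + 1)) = ystar
    exact hout _ (Nat.succ_le_of_lt (Nat.mod_lt _ hlen))

/-- Output regulation to `y*` by state feedback is solvable iff (i) the set `C(y*)` of
cycles of `D(L_tot)` with all nodes in `X(y*)` is nonempty, and (ii) the union of the
basins of attraction of the states on those cycles is the whole state set. -/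
theorem stmt19 {N M P : ℕ} (hN : 0 < N) (f : Fin M → Fin N → Fin N)
    (hmap : Fin N → Fin P) (ystar : Fin P) :
    (∃ K : Fin N → Fin M, ∀ x0 : Fin N, ∃ τ, ∀ t, τ ≤ t →
        hmap ((fun x => f (K x) x)^[t] x0) = ystar) ↔
      ((∃ j, OnCycle f hmap ystar j) ∧
        ∀ x0 : Fin N, ∃ j, OnCycle f hmap ystar j ∧
          ∃ τ, ∃ u : ℕ → Fin M, traj f u x0 τ = j) := by
  constructor
  · rintro ⟨K, hK⟩
    set g : Fin N → Fin N := fun x => f (K x) x with hg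
    have key : ∀ x0 : Fin N, ∃ j, OnCycle f hmap ystar j ∧
        ∃ τ, ∃ u : ℕ → Fin M, traj f u x0 τ = j := by
      intro x0
      obtain ⟨τ, hτ⟩ := hK x0
      obtain ⟨a, b, hab, heq⟩ : ∃ a b : ℕ, a < b ∧ g^[τ + a] x0 = g^[τ + b] x0 := by
        obtain ⟨a, b, hne, h⟩ :=
          Finite.exists_ne_map_eq_of_infinite (fun t : ℕ => g^[τ + t] x0)
        rcases hne.lt_or_gt with h1 | h1
        · exact ⟨a, b, h1, h⟩
        · exact ⟨b, a, h1, h.symm⟩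
      refine ⟨g^[τ + a] x0, ?_, τ + a, fun t => K (g^[t] x0), ?_⟩
      · refine ⟨b - a, by omega, fun t => g^[τ + a + t] x0, by simp, ?_, ?_, ?_⟩
        · show g^[τ + a + (b - a)] x0 = _
          have h2 : τ + a + (b - a) = τ + b := by omega
          rw [h2]; exact heq.symm
        · intro t _
          refine ⟨K (g^[τ + a + t] x0), ?_⟩
          show f (K (g^[τ + a + t] x0)) (g^[τ + a + t] x0) = g^[τ + a + t + 1] x0
          rw [Function.iterate_succ_apply' g _ x0]
        · intro t _
          exact hτ (τ + a + t) (by omega)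
      · have : ∀ t, traj f (fun t => K (g^[t] x0)) x0 t = g^[t] x0 := by
          intro t
          induction t with
          | zero => rfl
          | succ t ih =>
            show f (K (g^[t] x0)) (traj f (fun t => K (g^[t] x0)) x0 t) = _
            rw [ih, Function.iterate_succ_apply' g t x0]
        exact this (τ + a)
    exact ⟨(key ⟨0, hN⟩).imp fun j h => h.1, key⟩
  · rintro ⟨-, hreach⟩
    classical
    have hex : ∀ x : Fin N, ∃ n, ∃ u : ℕ → Fin M, OnCycle f hmap ystar (traj f u x n) := by
      intro x
      obtain ⟨j, hj, τ, u, hu⟩ := hreach x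
      exact ⟨τ, u, hu ▸ hj⟩
    set d : Fin N → ℕ := fun x => Nat.find (hex x) with hd
    set K : Fin N → Fin M := fun x =>
      if hx : OnCycle f hmap ystar x then (onCycle_step hx).2.choose
      else (Nat.find_spec (hex x)).choose 0 with hKdef
    set g : Fin N → Fin N := fun x => f (K x) x with hg
    have good_inv : ∀ x : Fin N, OnCycle f hmap ystar x → OnCycle f hmap ystar (g x) := by
      intro x hx
      have : g x = f ((onCycle_step hx).2.choose) x := by
        show f (K x) x = _
        rw [hKdef]; simp [hx]
      rw [this]
      exact (onCycle_step hx).2.choose_spec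
    have d_zero : ∀ x : Fin N, d x = 0 → OnCycle f hmap ystar x := by
      intro x h0
      obtain ⟨u, hu⟩ := Nat.find_spec (hex x)
      rw [show Nat.find (hex x) = 0 from h0] at hu
      exact hu
    have d_dec : ∀ x : Fin N, ¬ OnCycle f hmap ystar x → d (g x) < d x := by
      intro x hx
      set u := (Nat.find_spec (hex x)).choose with hu
      have huspec : OnCycle f hmap ystar (traj f u x (d x)) :=
        (Nat.find_spec (hex x)).choose_spec
      have hdpos : d x ≠ 0 := by
        intro h0
        exact hx (d_zero x h0)
      obtain ⟨m, hm'⟩ := Nat.exists_eq_succ_of_ne_zero hdpos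
      have hm : d x = m + 1 := hm'
      have hgx : g x = f (u 0) x := by
        show f (K x) x = _
        rw [hKdef]; simp [hx, ← hu]
      have : OnCycle f hmap ystar (traj f (fun s => u (s + 1)) (f (u 0) x) m) := by
        rw [← traj_shift, ← hm]
        exact huspec
      have hle : d (f (u 0) x) ≤ m := Nat.find_le ⟨_, this⟩
      rw [hgx]
      omega
    have good_iter : ∀ n (x : Fin N), OnCycle f hmap ystar x →
        OnCycle f hmap ystar (g^[n] x) := by
      intro n
      induction n with
      | zero => intro x hx; exact hx
      | succ n ih =>
        intro x hx
        rw [Function.iterate_succ_apply]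
        exact ih _ (good_inv x hx)
    have reach_good : ∀ n (x : Fin N), d x ≤ n → OnCycle f hmap ystar (g^[n] x) := by
      intro n
      induction n with
      | zero =>
        intro x hx
        exact d_zero x (Nat.le_zero.mp hx)
      | succ n ih =>
        intro x hx
        by_cases h : OnCycle f hmap ystar x
        · exact good_iter _ x h
        · rw [Function.iterate_succ_apply]
          exact ih _ (by have := d_dec x h; omega)
    refine ⟨K, fun x0 => ⟨d x0, fun t ht => ?_⟩⟩
    have : OnCycle f hmap ystar (g^[t] x0) := reach_good t x0 ht
    exact (onCycle_step this).1
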